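/- Let 1 ≤ q < p < ∞ and suppose there exists a bounded monotone countably quasi-additive set function Φ̃_{p,q} on open subsets of Ω̃ with Φ̃_{p,q}(Ω̃) ≤ M such that cap_q(φ⁻¹(F);φ⁻¹(Ã))^{1/q} ≤ Φ̃_{p,q}(Ã)^{(p−q)/(pq)} cap_p(F;Ã)^{1/p} for every ring condenser (F;Ã) ⊂ Ω̃. Then the set function Ψ̃_{p,q}(Ã) = sup_{(F;G)⊂Ã, cap_p≠0} ( cap_q(φ⁻¹(F);φ⁻¹(G))^{1/q} / cap_p(F;G)^{1/p} )^{pq/(p−q)} satisfies Ψ̃_{p,q}(Ã) ≤ Φ̃_{p,q}(Ã) for all open Ã ⊂ Ω̃, and its variation satisfies V(Ψ̃_{p,q}, Ω̃) ≤ M. -/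
import Mathlib


open MeasureTheory Metric Set

noncomputable def gradIntegral (n : ℕ) (p : ℝ) (f : EuclideanSpace ℝ (Fin n) → ℝ) : ℝ :=
  ∫ x, ‖fderiv ℝ f x‖ ^ p

def Admissible (n : ℕ) (F G : Set (EuclideanSpace ℝ (Fin n)))
    (f : EuclideanSpace ℝ (Fin n) → ℝ) : Prop :=
  Continuous f ∧ HasCompactSupport f ∧ tsupport f ⊆ G ∧ ∀ x ∈ F, 1 ≤ f x

noncomputable def capacity (n : ℕ) (p : ℝ) (F G : Set (EuclideanSpace ℝ (Fin n))) : ℝ :=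
  sInf { c | ∃ f, Admissible n F G f ∧ c = gradIntegral n p f }

def IsRingCondenser (n : ℕ) (F G Ω : Set (EuclideanSpace ℝ (Fin n))) : Prop :=
  IsCompact F ∧ IsConnected F ∧ IsOpen G ∧ IsConnected G ∧ F ⊆ G ∧ G ⊆ Ω

/-- The capacitary set function `Ψ̃_{p,q}` associated with a homeomorphism (given via the
inverse map `ψ = φ⁻¹`). -/
noncomputable def PsiSet (n : ℕ) (p q : ℝ)
    (ψ : EuclideanSpace ℝ (Fin n) → EuclideanSpace ℝ (Fin n))
    (A : Set (EuclideanSpace ℝ (Fin n))) : ℝ :=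
  sSup { r : ℝ | ∃ F G : Set (EuclideanSpace ℝ (Fin n)), IsRingCondenser n F G A ∧
    capacity n p F G ≠ 0 ∧
    r = (capacity n q (ψ '' F) (ψ '' G) ^ (1/q) / capacity n p F G ^ (1/p)) ^ (p*q/(p-q)) }

/-- The variation of a set function over countable disjoint open families inside `Ω'`. -/
noncomputable def variation (n : ℕ) (Ψ : Set (EuclideanSpace ℝ (Fin n)) → ℝ)
    (Ω' : Set (EuclideanSpace ℝ (Fin n))) : ENNReal :=
  ⨆ (A : ℕ → Set (EuclideanSpace ℝ (Fin n))) (_ : ∀ k, IsOpen (A k))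
    (_ : ∀ k, A k ⊆ Ω') (_ : Pairwise (Function.onFun Disjoint A)),
    ∑' k, ENNReal.ofReal (Ψ (A k))

lemma capacity_nonneg (n : ℕ) (p : ℝ) (F G : Set (EuclideanSpace ℝ (Fin n))) :
    0 ≤ capacity n p F G := by
  apply Real.sInf_nonneg
  rintro c ⟨f, -, rfl⟩
  exact integral_nonneg fun x => Real.rpow_nonneg (norm_nonneg _) p

/-- If a bounded monotone countably quasi-additive set function `Φ̃_{p,q}` dominates the ring
capacity distortion, then `Ψ̃_{p,q} ≤ Φ̃_{p,q}` and the variation of `Ψ̃_{p,q}` is at most `M`. -/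
theorem stmt_7 (n : ℕ) (p q M : ℝ) (hq : 1 ≤ q) (hqp : q < p)
    (Ω Ω' : Set (EuclideanSpace ℝ (Fin n)))
    (hΩ : IsOpen Ω) (hΩ' : IsOpen Ω')
    (φ ψ : EuclideanSpace ℝ (Fin n) → EuclideanSpace ℝ (Fin n))
    (hφ : ContinuousOn φ Ω) (hψ : ContinuousOn ψ Ω')
    (hmaps : Set.MapsTo φ Ω Ω') (hmaps' : Set.MapsTo ψ Ω' Ω)
    (hli : ∀ x ∈ Ω, ψ (φ x) = x) (hri : ∀ y ∈ Ω', φ (ψ y) = y)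
    (Φ : Set (EuclideanSpace ℝ (Fin n)) → ℝ)
    (hnonneg : ∀ U, IsOpen U → U ⊆ Ω' → 0 ≤ Φ U)
    (hmono : ∀ U₁ U₂, IsOpen U₁ → IsOpen U₂ → U₁ ⊆ U₂ → U₂ ⊆ Ω' → Φ U₁ ≤ Φ U₂)
    (hquasi : ∀ A : ℕ → Set (EuclideanSpace ℝ (Fin n)), (∀ i, IsOpen (A i)) →
      (∀ i, A i ⊆ Ω') → Pairwise (Function.onFun Disjoint A) →
      ∑' i, ENNReal.ofReal (Φ (A i)) ≤ ENNReal.ofReal (Φ (⋃ i, A i)))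
    (hbound : Φ Ω' ≤ M)
    (hcap : ∀ F A : Set (EuclideanSpace ℝ (Fin n)), IsRingCondenser n F A Ω' →
      capacity n q (ψ '' F) (ψ '' A) ^ (1/q)
        ≤ Φ A ^ ((p - q)/(p*q)) * capacity n p F A ^ (1/p)) :
    (∀ A : Set (EuclideanSpace ℝ (Fin n)), IsOpen A → A ⊆ Ω' →
        PsiSet n p q ψ A ≤ Φ A) ∧
    variation n (PsiSet n p q ψ) Ω' ≤ ENNReal.ofReal M := by
  have hq0 : (0:ℝ) < q := lt_of_lt_of_le one_pos hq
  have hp0 : (0:ℝ) < p := hq0.trans hqp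
  have hpq : (0:ℝ) < p - q := sub_pos.mpr hqp
  have key : ∀ A : Set (EuclideanSpace ℝ (Fin n)), IsOpen A → A ⊆ Ω' →
      PsiSet n p q ψ A ≤ Φ A := by
    intro A hA hAΩ
    apply Real.sSup_le _ (hnonneg A hA hAΩ)
    rintro r ⟨F, G, ⟨hF, hFc, hG, hGc, hFG, hGA⟩, hne, rfl⟩
    have hGΩ : G ⊆ Ω' := hGA.trans hAΩ
    have hcondΩ : IsRingCondenser n F G Ω' := ⟨hF, hFc, hG, hGc, hFG, hGΩ⟩
    have hΦG : 0 ≤ Φ G := hnonneg G hG hGΩ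
    have hcp : 0 < capacity n p F G := (capacity_nonneg n p F G).lt_of_ne (Ne.symm hne)
    have hcpp : 0 < capacity n p F G ^ (1/p) := Real.rpow_pos_of_pos hcp _
    have h1 : capacity n q (ψ '' F) (ψ '' G) ^ (1/q) / capacity n p F G ^ (1/p)
        ≤ Φ G ^ ((p-q)/(p*q)) := by
      rw [div_le_iff₀ hcpp]; exact hcap F G hcondΩ
    have hbase : 0 ≤ capacity n q (ψ '' F) (ψ '' G) ^ (1/q) / capacity n p F G ^ (1/p) := by
      have := capacity_nonneg n q (ψ '' F) (ψ '' G)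
      positivity
    have hmul : ((p-q)/(p*q)) * (p*q/(p-q)) = 1 := by
      field_simp
    calc (capacity n q (ψ '' F) (ψ '' G) ^ (1/q) / capacity n p F G ^ (1/p)) ^ (p*q/(p-q))
        ≤ (Φ G ^ ((p-q)/(p*q))) ^ (p*q/(p-q)) :=
          Real.rpow_le_rpow hbase h1 (by positivity)
      _ = Φ G ^ (((p-q)/(p*q)) * (p*q/(p-q))) := (Real.rpow_mul hΦG _ _).symm
      _ = Φ G := by rw [hmul, Real.rpow_one]
      _ ≤ Φ A := hmono G A hG hA hGA hAΩ
  refine ⟨key, ?_⟩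
  rw [variation]
  refine iSup_le fun A => iSup_le fun hopen => iSup_le fun hsub => iSup_le fun hdisj => ?_
  calc ∑' k, ENNReal.ofReal (PsiSet n p q ψ (A k))
      ≤ ∑' k, ENNReal.ofReal (Φ (A k)) :=
        ENNReal.tsum_le_tsum fun k => ENNReal.ofReal_le_ofReal (key _ (hopen k) (hsub k))
    _ ≤ ENNReal.ofReal (Φ (⋃ i, A i)) := hquasi A hopen hsub hdisj
    _ ≤ ENNReal.ofReal M := ENNReal.ofReal_le_ofReal
        ((hmono _ _ (isOpen_iUnion hopen) hΩ' (iUnion_subset hsub) subset_rfl).trans hbound)
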